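/- arXiv:2601.22843 — 2 statements merged into one kernel-verified Lean document; each statement's English description precedes it below -/
import Mathlib

section
/- Let P₁ be the orthogonal projection onto a k₁-dimensional subspace V₁ of ℝⁿ, P₂ the orthogonal projection onto a k₂-dimensional subspace V₂, S the orthogonal projection onto V₁ ∩ V₂ (of dimension k), and Q any real symmetric projection matrix. Then for each i with 1 ≤ i ≤ n - (k₂ - k): λ_i(QP₁) ≥ λ_i(QS) ≥ λ_{i + k₂ - k}(QP₂), where λ_j(M) denotes the j-th largest eigenvalue. -/
/-!
Replace each `Q X` (`X = P₁, S, P₂`) by `X Q X`, which has the same characteristic polynomial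
because `X` is idempotent, and which is symmetric and positive semidefinite; its eigenvalues are
then governed by the Courant–Fischer min-max principle.

Since `V₁ ∩ V₂ ⊆ V₁`, the quadratic form of `S Q S` at `x` is that of `P₁ Q P₁` at the shorter
vector `S x`; transporting the top `i + 1` eigenvectors of `S Q S` by `S` gives
`λᵢ(S Q S) ≤ λᵢ(P₁ Q P₁)` (positivity of `P₁ Q P₁` covers the case `λᵢ(S Q S) ≤ 0`).

For the other side, `P₂ Q P₂` vanishes on `V₂ᗮ` and has the same quadratic form as `S Q S` on
`V₁ ∩ V₂`, a subspace of codimension `k₂ - k` in `V₂`. The eigenvectors of `S Q S` from index `i`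
on, cut down to `V₁ ∩ V₂` and enlarged by `V₂ᗮ`, span a space of dimension at least
`n - i - (k₂ - k)` on which the form of `P₂ Q P₂` is at most `λᵢ(S Q S) ‖x‖²`, so
`λ_{i + k₂ - k}(P₂ Q P₂) ≤ λᵢ(S Q S)`.
-/

open Module Submodule RCLike
open scoped InnerProductSpace

variable {𝕜 E : Type*} [RCLike 𝕜] [NormedAddCommGroup E] [InnerProductSpace 𝕜 E]

namespace OrthonormalBasis

variable {ι : Type*} [Fintype ι] (b : OrthonormalBasis ι 𝕜 E)

lemma finrank_span_image (J : Finset ι) : finrank 𝕜 (span 𝕜 (b '' J)) = J.card := by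
  rw [Set.image_eq_range]
  exact (finrank_span_eq_card (b.orthonormal.linearIndependent.comp (Subtype.val : J → ι)
    Subtype.val_injective)).trans (Fintype.card_coe J)

lemma norm_sq_eq_sum_repr (x : E) : ‖x‖ ^ 2 = ∑ i, ‖b.repr x i‖ ^ 2 := by
  rw [← b.repr.norm_map, EuclideanSpace.norm_sq_eq]

lemma repr_eq_zero_of_mem_span_image {J : Set ι} {x : E} (hx : x ∈ span 𝕜 (b '' J)) {j : ι}
    (hj : j ∉ J) : b.repr x j = 0 := by
  have := b.toBasis.repr_support_subset_of_mem_span J (by simpa using hx)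
  simpa using Finsupp.notMem_support_iff.mp (fun h => hj (this h))

end OrthonormalBasis

namespace LinearMap.IsSymmetric

variable [FiniteDimensional 𝕜 E] {T : E →ₗ[𝕜] E} (hT : T.IsSymmetric) {n : ℕ}
  (hn : finrank 𝕜 E = n)

lemma re_inner_apply_self_eq_sum (x : E) :
    re ⟪T x, x⟫_𝕜 = ∑ j, hT.eigenvalues hn j * ‖(hT.eigenvectorBasis hn).repr x j‖ ^ 2 := by
  rw [← (hT.eigenvectorBasis hn).repr.inner_map_map, PiLp.inner_apply, map_sum]
  refine Finset.sum_congr rfl fun j _ => ?_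
  rw [eigenvectorBasis_apply_self_apply, ← smul_eq_mul, inner_smul_real_left, smul_re,
    inner_self_eq_norm_sq]

lemma re_inner_apply_self_le_of_mem_span {J : Set (Fin n)} {c : ℝ}
    (hc : ∀ j ∈ J, hT.eigenvalues hn j ≤ c) {x : E}
    (hx : x ∈ span 𝕜 (hT.eigenvectorBasis hn '' J)) : re ⟪T x, x⟫_𝕜 ≤ c * ‖x‖ ^ 2 := by
  rw [hT.re_inner_apply_self_eq_sum hn, (hT.eigenvectorBasis hn).norm_sq_eq_sum_repr,
    Finset.mul_sum]
  refine Finset.sum_le_sum fun j _ => ?_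
  by_cases hj : j ∈ J
  · exact mul_le_mul_of_nonneg_right (hc j hj) (sq_nonneg _)
  · simp [OrthonormalBasis.repr_eq_zero_of_mem_span_image _ hx hj]

lemma le_re_inner_apply_self_of_mem_span {J : Set (Fin n)} {c : ℝ}
    (hc : ∀ j ∈ J, c ≤ hT.eigenvalues hn j) {x : E}
    (hx : x ∈ span 𝕜 (hT.eigenvectorBasis hn '' J)) : c * ‖x‖ ^ 2 ≤ re ⟪T x, x⟫_𝕜 := by
  rw [hT.re_inner_apply_self_eq_sum hn, (hT.eigenvectorBasis hn).norm_sq_eq_sum_repr,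
    Finset.mul_sum]
  refine Finset.sum_le_sum fun j _ => ?_
  by_cases hj : j ∈ J
  · exact mul_le_mul_of_nonneg_right (hc j hj) (sq_nonneg _)
  · simp [OrthonormalBasis.repr_eq_zero_of_mem_span_image _ hx hj]

lemma exists_finrank_eq_forall_eigenvalues_mul_le (i : Fin n) :
    ∃ W : Submodule 𝕜 E, finrank 𝕜 W = i + 1 ∧
      ∀ x ∈ W, hT.eigenvalues hn i * ‖x‖ ^ 2 ≤ re ⟪T x, x⟫_𝕜 :=
  ⟨_, by rw [OrthonormalBasis.finrank_span_image, Fin.card_Iic],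
    fun _ => hT.le_re_inner_apply_self_of_mem_span hn fun _ hj =>
      hT.eigenvalues_antitone hn (Finset.mem_Iic.mp hj)⟩

lemma exists_finrank_eq_forall_le_eigenvalues_mul (i : Fin n) :
    ∃ W : Submodule 𝕜 E, finrank 𝕜 W = n - i ∧
      ∀ x ∈ W, re ⟪T x, x⟫_𝕜 ≤ hT.eigenvalues hn i * ‖x‖ ^ 2 :=
  ⟨_, by rw [OrthonormalBasis.finrank_span_image, Fin.card_Ici],
    fun _ => hT.re_inner_apply_self_le_of_mem_span hn fun _ hj =>
      hT.eigenvalues_antitone hn (Finset.mem_Ici.mp hj)⟩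

lemma le_eigenvalues_of_forall_mul_le {i : Fin n} {c : ℝ} {W : Submodule 𝕜 E}
    (hW : i + 1 ≤ finrank 𝕜 W) (hc : ∀ x ∈ W, c * ‖x‖ ^ 2 ≤ re ⟪T x, x⟫_𝕜) :
    c ≤ hT.eigenvalues hn i := by
  by_contra! h
  obtain ⟨Z, hZ, hZT⟩ := hT.exists_finrank_eq_forall_le_eigenvalues_mul hn i
  have hWZ : Disjoint W Z := by
    refine Submodule.disjoint_def.mpr fun x hxW hxZ => ?_
    by_contra hx
    exact (mul_lt_mul_of_pos_right h (pow_pos (norm_pos_iff.mpr hx) 2)).not_ge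
      ((hc x hxW).trans (hZT x hxZ))
  have := Submodule.finrank_add_finrank_le_of_disjoint hWZ
  omega

lemma eigenvalues_le_of_forall_le_mul {i : Fin n} {c : ℝ} {W : Submodule 𝕜 E}
    (hW : n ≤ finrank 𝕜 W + i) (hc : ∀ x ∈ W, re ⟪T x, x⟫_𝕜 ≤ c * ‖x‖ ^ 2) :
    hT.eigenvalues hn i ≤ c := by
  by_contra! h
  obtain ⟨Z, hZ, hZT⟩ := hT.exists_finrank_eq_forall_eigenvalues_mul_le hn i
  have hWZ : Disjoint W Z := by
    refine Submodule.disjoint_def.mpr fun x hxW hxZ => ?_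
    by_contra hx
    exact (mul_lt_mul_of_pos_right h (pow_pos (norm_pos_iff.mpr hx) 2)).not_ge
      ((hZT x hxZ).trans (hc x hxW))
  have := Submodule.finrank_add_finrank_le_of_disjoint hWZ
  omega

open Polynomial in
theorem eigenvalues_eq_of_charpoly_eq {a : Fin n → ℝ} (ha : Antitone a)
    (h : T.charpoly = ∏ i, (X - C (a i : 𝕜))) : hT.eigenvalues hn = a := by
  have hroots : T.charpoly.roots = Multiset.map (fun i => (a i : 𝕜)) Finset.univ.val := by
    rw [h]
    simpa [Finset.prod_eq_multiset_prod, Multiset.map_map, Function.comp_def] using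
      roots_multiset_prod_X_sub_C (Multiset.map (fun i => (a i : 𝕜)) Finset.univ.val)
  rw [← List.ofFn_inj, ← hT.sort_roots_charpoly_eq_eigenvalues hn, hroots, Multiset.map_map]
  simp only [Function.comp_def, RCLike.ofReal_re, Fin.univ_val_map, Multiset.coe_sort]
  apply List.mergeSort_of_pairwise
  simp_rw [decide_eq_true_eq, ← List.sortedGE_iff_pairwise]
  exact ha.sortedGE_ofFn

end LinearMap.IsSymmetric

namespace LinearMap

theorem IsSymmetric.inner_conj_apply_self {p : E →ₗ[𝕜] E} (hp : p.IsSymmetric) (q : E →ₗ[𝕜] E)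
    (x : E) : ⟪(p ∘ₗ q ∘ₗ p) x, x⟫_𝕜 = ⟪q (p x), p x⟫_𝕜 :=
  hp _ _

theorem IsSymmetricProjection.norm_apply_le {p : E →ₗ[𝕜] E} (hp : p.IsSymmetricProjection)
    (x : E) : ‖p x‖ ≤ ‖x‖ := by
  obtain ⟨K, _, rfl⟩ := isSymmetricProjection_iff_eq_coe_starProjection.mp hp
  exact K.norm_starProjection_apply_le x

variable [FiniteDimensional 𝕜 E] {n : ℕ} (hn : finrank 𝕜 E = n)

theorem IsPositive.eigenvalues_le_of_contraction {T T' A : E →ₗ[𝕜] E} (hT : T.IsPositive)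
    (hT' : T'.IsSymmetric) (hA : ∀ x, ‖A x‖ ≤ ‖x‖)
    (hTA : ∀ x, re ⟪T' x, x⟫_𝕜 = re ⟪T (A x), A x⟫_𝕜) (i : Fin n) :
    hT'.eigenvalues hn i ≤ hT.isSymmetric.eigenvalues hn i := by
  rcases le_or_gt (hT'.eigenvalues hn i) 0 with hle | hpos
  · exact hle.trans (hT.nonneg_eigenvalues hn i)
  obtain ⟨Z, hZ, hZT⟩ := hT'.exists_finrank_eq_forall_eigenvalues_mul_le hn i
  have hinj : Function.Injective (A ∘ₗ Z.subtype) := by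
    refine (injective_iff_map_eq_zero _).mpr fun ⟨x, hx⟩ hAx => ?_
    have := hZT x hx
    rw [hTA, show A x = 0 from hAx, map_zero, inner_zero_right, map_zero] at this
    simpa using nonpos_of_mul_nonpos_right this hpos
  refine hT.isSymmetric.le_eigenvalues_of_forall_mul_le hn (W := range (A ∘ₗ Z.subtype))
    (by rw [finrank_range_of_inj hinj, hZ]) ?_
  rintro _ ⟨⟨x, hx⟩, rfl⟩
  calc hT'.eigenvalues hn i * ‖A x‖ ^ 2 ≤ hT'.eigenvalues hn i * ‖x‖ ^ 2 := by
        gcongr; exact hA x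
    _ ≤ re ⟪T' x, x⟫_𝕜 := hZT x hx
    _ = re ⟪T (A x), A x⟫_𝕜 := hTA x

theorem IsSymmetric.eigenvalues_shift_le_of_re_inner_eq {T T' : E →ₗ[𝕜] E} (hT : T.IsSymmetric)
    (hT' : T'.IsPositive) {U V : Submodule 𝕜 E} (hUV : U ≤ V) (hTV : Vᗮ ≤ ker T)
    (hTU : ∀ u ∈ U, re ⟪T' u, u⟫_𝕜 = re ⟪T u, u⟫_𝕜) {i j : Fin n}
    (hij : (j : ℕ) = i + (finrank 𝕜 V - finrank 𝕜 U)) :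
    hT.eigenvalues hn j ≤ hT'.isSymmetric.eigenvalues hn i := by
  obtain ⟨Z, hZ, hZT⟩ := hT'.isSymmetric.exists_finrank_eq_forall_le_eigenvalues_mul hn i
  refine hT.eigenvalues_le_of_forall_le_mul hn (W := Z ⊓ U ⊔ Vᗮ) ?_ ?_
  · have hZU := Submodule.finrank_sup_add_finrank_inf_eq Z U
    have hZUV := Submodule.finrank_sup_add_finrank_inf_eq (Z ⊓ U) Vᗮ
    rw [(V.orthogonal_disjoint.mono_left (inf_le_right.trans hUV)).eq_bot, finrank_bot] at hZUV
    have := Submodule.finrank_le (Z ⊔ U)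
    have := Submodule.finrank_le (Z ⊓ U ⊔ Vᗮ)
    have := V.finrank_add_finrank_orthogonal
    have := Submodule.finrank_mono hUV
    omega
  · intro x hx
    obtain ⟨u, ⟨huZ, huU⟩, w, hw, rfl⟩ := Submodule.mem_sup.mp hx
    have huw : ⟪u, w⟫_𝕜 = 0 := V.inner_right_of_mem_orthogonal (hUV huU) hw
    have hTw : T w = 0 := hTV hw
    have hform : ⟪T (u + w), u + w⟫_𝕜 = ⟪T u, u⟫_𝕜 := by
      rw [map_add, hTw, add_zero, inner_add_right, hT u w, hTw, inner_zero_right, add_zero]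
    have hnorm : ‖u‖ ^ 2 ≤ ‖u + w‖ ^ 2 := by
      rw [sq, sq, norm_add_sq_eq_norm_sq_add_norm_sq_of_inner_eq_zero u w huw]
      exact le_add_of_nonneg_right (mul_self_nonneg _)
    calc re ⟪T (u + w), u + w⟫_𝕜 = re ⟪T' u, u⟫_𝕜 := by rw [hform, hTU u huU]
      _ ≤ hT'.isSymmetric.eigenvalues hn i * ‖u‖ ^ 2 := hZT u huZ
      _ ≤ hT'.isSymmetric.eigenvalues hn i * ‖u + w‖ ^ 2 := by
        gcongr; exact hT'.nonneg_eigenvalues hn i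

theorem IsPositive.conj_of_isSymmetric {q p : E →ₗ[𝕜] E} (hq : q.IsPositive)
    (hp : p.IsSymmetric) : (p ∘ₗ q ∘ₗ p).IsPositive := by
  simpa [hp.adjoint_eq] using hq.conj_adjoint p

namespace IsSymmetricProjection

variable {p s q : E →ₗ[𝕜] E} (hp : p.IsSymmetricProjection) (hs : s.IsSymmetricProjection)
  (hq : q.IsPositive)

theorem eigenvalues_conj_le_of_range_le (hsp : range s ≤ range p) (i : Fin n) :
    (hq.conj_of_isSymmetric hs.isSymmetric).isSymmetric.eigenvalues hn i ≤
      (hq.conj_of_isSymmetric hp.isSymmetric).isSymmetric.eigenvalues hn i := by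
  refine (hq.conj_of_isSymmetric hp.isSymmetric).eigenvalues_le_of_contraction hn _
    hs.norm_apply_le (fun x => ?_) i
  rw [hs.isSymmetric.inner_conj_apply_self, hp.isSymmetric.inner_conj_apply_self,
    (IsIdempotentElem.mem_range_iff hp.isIdempotentElem).mp (hsp (mem_range_self s x))]

theorem eigenvalues_conj_shift_le_of_range_le (hsp : range s ≤ range p) {i j : Fin n}
    (hij : (j : ℕ) = i + (finrank 𝕜 (range p) - finrank 𝕜 (range s))) :
    (hq.conj_of_isSymmetric hp.isSymmetric).isSymmetric.eigenvalues hn j ≤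
      (hq.conj_of_isSymmetric hs.isSymmetric).isSymmetric.eigenvalues hn i := by
  refine (hq.conj_of_isSymmetric hp.isSymmetric).isSymmetric.eigenvalues_shift_le_of_re_inner_eq
    hn (hq.conj_of_isSymmetric hs.isSymmetric) hsp ?_ (fun u hu => ?_) hij
  · rw [hp.isSymmetric.orthogonal_range]
    intro x hx
    simp [mem_ker.mp hx]
  · rw [hs.isSymmetric.inner_conj_apply_self, hp.isSymmetric.inner_conj_apply_self,
      (IsIdempotentElem.mem_range_iff hs.isIdempotentElem).mp hu,
      (IsIdempotentElem.mem_range_iff hp.isIdempotentElem).mp (hsp hu)]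

end IsSymmetricProjection

end LinearMap

namespace Matrix

variable {m : Type*} [Fintype m] [DecidableEq m]

theorem isSymmetricProjection_toEuclideanLin {P : Matrix m m ℝ} (hPs : Pᵀ = P)
    (hP : P ^ 2 = P) : (toEuclideanLin P).IsSymmetricProjection where
  isIdempotentElem := by
    change toEuclideanLin P ∘ₗ toEuclideanLin P = toEuclideanLin P
    rw [← toLpLin_mul_same, ← sq, hP]
  isSymmetric := isSymmetric_toEuclideanLin_iff.mpr <| by
    rw [IsHermitian, conjTranspose_eq_transpose_of_trivial, hPs]

theorem range_toEuclideanLin_mono {M N : Matrix m m 𝕜}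
    (h : LinearMap.range M.mulVecLin ≤ LinearMap.range N.mulVecLin) :
    LinearMap.range (toEuclideanLin M) ≤ LinearMap.range (toEuclideanLin N) := by
  rintro _ ⟨x, rfl⟩
  obtain ⟨y, hy⟩ := h ⟨WithLp.ofLp x, rfl⟩
  exact ⟨WithLp.toLp 2 y, by simpa [toLpLin_apply] using hy⟩

theorem finrank_range_toEuclideanLin (M : Matrix m m 𝕜) :
    finrank 𝕜 (LinearMap.range (toEuclideanLin M)) = M.rank :=
  (M.rank_eq_finrank_range_toLin (PiLp.basisFun 2 𝕜 m) (PiLp.basisFun 2 𝕜 m)).symm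

theorem charpoly_toEuclideanLin (M : Matrix m m 𝕜) : (toEuclideanLin M).charpoly = M.charpoly :=
  charpoly_toLin M (PiLp.basisFun 2 𝕜 m)

open Polynomial in
theorem eigenvalues_conj_toEuclideanLin_eq {n : ℕ} {P Q : Matrix (Fin n) (Fin n) ℝ}
    (hP : P ^ 2 = P) (hp : (toEuclideanLin P).IsSymmetric) (hq : (toEuclideanLin Q).IsPositive)
    {a : Fin n → ℝ} (ha : Antitone a) (h : (Q * P).charpoly = ∏ i, (X - C (a i))) :
    (hq.conj_of_isSymmetric hp).isSymmetric.eigenvalues finrank_euclideanSpace_fin = a := by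
  refine LinearMap.IsSymmetric.eigenvalues_eq_of_charpoly_eq _ _ ha ?_
  have hconj : toEuclideanLin P ∘ₗ toEuclideanLin Q ∘ₗ toEuclideanLin P =
      toEuclideanLin (P * (Q * P)) := by
    simp
  rw [hconj, charpoly_toEuclideanLin, charpoly_mul_comm, Matrix.mul_assoc, ← sq, hP]
  simpa using h

end Matrix

open Matrix LinearMap in
theorem eigenvalue_interlacing_general {n k k₂ : ℕ}
    (P₁ P₂ S Q : Matrix (Fin n) (Fin n) ℝ)
    (hP₁s : P₁.transpose = P₁) (hP₁ : P₁ ^ 2 = P₁)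
    (hP₂s : P₂.transpose = P₂) (hP₂ : P₂ ^ 2 = P₂) (hk₂ : P₂.rank = k₂)
    (hSs : S.transpose = S) (hS : S ^ 2 = S) (hk : S.rank = k)
    (hrange : LinearMap.range S.mulVecLin
      = LinearMap.range P₁.mulVecLin ⊓ LinearMap.range P₂.mulVecLin)
    (hQs : Q.transpose = Q) (hQ : Q ^ 2 = Q)
    (μ ν ρ : Fin n → ℝ) (hμa : Antitone μ) (hνa : Antitone ν) (hρa : Antitone ρ)
    (hμ : (Q * P₁).charpoly = ∏ i : Fin n, (Polynomial.X - Polynomial.C (μ i)))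
    (hν : (Q * S).charpoly = ∏ i : Fin n, (Polynomial.X - Polynomial.C (ν i)))
    (hρ : (Q * P₂).charpoly = ∏ i : Fin n, (Polynomial.X - Polynomial.C (ρ i))) :
    ∀ i j : Fin n, (j : ℕ) = (i : ℕ) + (k₂ - k) → ν i ≤ μ i ∧ ρ j ≤ ν i := by
  intro i j hij
  have hp₁ := isSymmetricProjection_toEuclideanLin hP₁s hP₁
  have hp₂ := isSymmetricProjection_toEuclideanLin hP₂s hP₂
  have hs := isSymmetricProjection_toEuclideanLin hSs hS
  have hq := (isSymmetricProjection_toEuclideanLin hQs hQ).isPositive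
  have hsp₁ : range (toEuclideanLin S) ≤ range (toEuclideanLin P₁) :=
    range_toEuclideanLin_mono (hrange ▸ inf_le_left)
  have hsp₂ : range (toEuclideanLin S) ≤ range (toEuclideanLin P₂) :=
    range_toEuclideanLin_mono (hrange ▸ inf_le_right)
  rw [← eigenvalues_conj_toEuclideanLin_eq hP₁ hp₁.isSymmetric hq hμa hμ,
    ← eigenvalues_conj_toEuclideanLin_eq hS hs.isSymmetric hq hνa hν,
    ← eigenvalues_conj_toEuclideanLin_eq hP₂ hp₂.isSymmetric hq hρa hρ]
  refine ⟨hp₁.eigenvalues_conj_le_of_range_le _ hs hq hsp₁ i,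
    hp₂.eigenvalues_conj_shift_le_of_range_le _ hs hq hsp₂ ?_⟩
  rwa [finrank_range_toEuclideanLin, finrank_range_toEuclideanLin, hk₂, hk]

/-- Interlacing inequalities (Thompson): let P₁, P₂ be orthogonal projections onto
subspaces of dimensions k₁, k₂, S the orthogonal projection onto their intersection
of dimension k, and Q a real symmetric projection. If μ, ν, ρ are the decreasingly
ordered eigenvalue lists of QP₁, QS, QP₂ (roots of their characteristic
polynomials), then λ_i(QP₁) ≥ λ_i(QS) ≥ λ_{i+k₂-k}(QP₂). -/
theorem eigenvalue_interlacing {n k k₁ k₂ : ℕ}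
    (P₁ P₂ S Q : Matrix (Fin n) (Fin n) ℝ)
    (hP₁s : P₁.transpose = P₁) (hP₁ : P₁ ^ 2 = P₁) (hk₁ : P₁.rank = k₁)
    (hP₂s : P₂.transpose = P₂) (hP₂ : P₂ ^ 2 = P₂) (hk₂ : P₂.rank = k₂)
    (hSs : S.transpose = S) (hS : S ^ 2 = S) (hk : S.rank = k)
    (hrange : LinearMap.range S.mulVecLin
      = LinearMap.range P₁.mulVecLin ⊓ LinearMap.range P₂.mulVecLin)
    (hQs : Q.transpose = Q) (hQ : Q ^ 2 = Q)
    (μ ν ρ : Fin n → ℝ) (hμa : Antitone μ) (hνa : Antitone ν) (hρa : Antitone ρ)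
    (hμ : (Q * P₁).charpoly = ∏ i : Fin n, (Polynomial.X - Polynomial.C (μ i)))
    (hν : (Q * S).charpoly = ∏ i : Fin n, (Polynomial.X - Polynomial.C (ν i)))
    (hρ : (Q * P₂).charpoly = ∏ i : Fin n, (Polynomial.X - Polynomial.C (ρ i))) :
    ∀ i j : Fin n, (j : ℕ) = (i : ℕ) + (k₂ - k) → ν i ≤ μ i ∧ ρ j ≤ ν i :=
  eigenvalue_interlacing_general P₁ P₂ S Q hP₁s hP₁ hP₂s hP₂ hk₂ hSs hS hk hrange hQs hQ μ ν ρ hμa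
    hνa hρa hμ hν hρ
end

section
/- If X and Y are skew-symmetric n×n matrices over a field and λ ≠ 0 is an eigenvalue of the product XY with elementary divisor (z - λ)^p, then (z - λ)^p occurs with even multiplicity among the elementary divisors of XY; in particular, every nonzero eigenvalue of XY has even algebraic multiplicity. -/
/-!
For skew-symmetric `A` and `B`, the matrix `(t - A B) A` over `F[t]` is again skew-symmetric, and
the determinant of a skew-symmetric matrix over an integrally closed domain is a square (its
Pfaffian squared; here this is proved over a field by splitting off a nonsingular `2 × 2` block
and passing to the Schur complement). So when `A` is invertible, `charpoly (A B) * det A` is a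
square in `F[t]`, and every root of `charpoly (A B)` has even multiplicity.

In general, `A` is replaced by the invertible skew-symmetric matrix `[[A, 1], [-1, 0]]` and `B` by
`[[B, 0], [0, 0]]`; this multiplies the characteristic polynomial of the product by `t ^ n`,
which does not change the multiplicity of a nonzero root.
-/

open Matrix Polynomial

theorem IsIntegrallyClosed.isSquare_of_isSquare_algebraMap {R K : Type*} [CommRing R]
    [CommRing K] [Algebra R K] [IsFractionRing R K] [IsIntegrallyClosed R] {r : R}
    (h : IsSquare (algebraMap R K r)) : IsSquare r := by
  obtain ⟨x, hx⟩ := h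
  have hx_int : IsIntegral R x :=
    IsIntegral.of_pow two_pos (by rw [sq, ← hx]; exact isIntegral_algebraMap)
  obtain ⟨y, rfl⟩ := IsIntegrallyClosed.isIntegral_iff.mp hx_int
  exact ⟨y, IsFractionRing.injective R K (by rw [hx, map_mul])⟩

theorem Polynomial.even_rootMultiplicity_of_isSquare {R : Type*} [CommRing R] [IsDomain R]
    {p : R[X]} (hp : IsSquare p) (a : R) : Even (p.rootMultiplicity a) := by
  obtain ⟨q, rfl⟩ := hp
  rcases eq_or_ne q 0 with rfl | hq
  · simp
  · exact ⟨_, rootMultiplicity_mul (mul_ne_zero hq hq)⟩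

namespace Matrix

section Skew

variable {R : Type*} [CommRing R] [NoZeroDivisors R]

theorem apply_self_eq_zero_of_transpose_eq_neg (h2 : (2 : R) ≠ 0) {n : Type*}
    {A : Matrix n n R} (hA : Aᵀ = -A) (i : n) : A i i = 0 := by
  have h : A i i = -A i i := congr_fun₂ hA i i
  exact (mul_eq_zero.mp (by linear_combination h : (2 : R) * A i i = 0)).resolve_left h2

theorem det_fin_two_of_transpose_eq_neg (h2 : (2 : R) ≠ 0) {A : Matrix (Fin 2) (Fin 2) R}
    (hA : Aᵀ = -A) : A.det = A 0 1 ^ 2 := by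
  have h10 : A 1 0 = -A 0 1 := congr_fun₂ hA 0 1
  rw [det_fin_two, apply_self_eq_zero_of_transpose_eq_neg h2 hA,
    apply_self_eq_zero_of_transpose_eq_neg h2 hA, h10]
  ring

end Skew

variable {K : Type*} [Field K] {m n : Type*} [Fintype m] [DecidableEq m] [Fintype n]
  [DecidableEq n]

/-- The witness `S` is the Schur complement `D - C A⁻¹ B`. -/
theorem exists_transpose_eq_neg_det_fromBlocks_eq_det_mul
    {A : Matrix m m K} {B : Matrix m n K} {C : Matrix n m K} {D : Matrix n n K}
    (hM : (fromBlocks A B C D)ᵀ = -fromBlocks A B C D) (hA₀ : A.det ≠ 0) :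
    ∃ S : Matrix n n K, Sᵀ = -S ∧ (fromBlocks A B C D).det = A.det * S.det := by
  rw [fromBlocks_transpose, fromBlocks_neg] at hM
  obtain ⟨hA, hC, hB, hD⟩ := fromBlocks_inj.mp hM
  have : Invertible A := invertibleOfIsUnitDet A (isUnit_iff_ne_zero.mpr hA₀)
  have hA_inv : (-A)⁻¹ = -A⁻¹ := inv_eq_left_inv (by simp)
  refine ⟨D - C * A⁻¹ * B, ?_, by rw [det_fromBlocks₁₁, invOf_eq_nonsing_inv]⟩
  rw [transpose_sub, transpose_mul, transpose_mul, transpose_nonsing_inv, hA, hB, hC, hD, hA_inv]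
  simp only [Matrix.neg_mul, Matrix.mul_neg, neg_neg, Matrix.mul_assoc]
  abel

theorem isSquare_det_of_transpose_eq_neg (h2 : (2 : K) ≠ 0) {A : Matrix n n K} (hA : Aᵀ = -A) :
    IsSquare A.det := by
  induction hN : Fintype.card n using Nat.strong_induction_on generalizing n with
  | _ N ih =>
  by_cases hA0 : A = 0
  · exact hA0 ▸ ⟨det (0 : Matrix n n K), by rw [← det_mul, zero_mul]⟩
  obtain ⟨i, j, hij⟩ : ∃ i j, A i j ≠ 0 := by
    by_contra! h
    exact hA0 (ext h)
  have hf : Function.Injective ![i, j] := injective_pair_iff_ne.mpr <| by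
    rintro rfl
    exact hij (apply_self_eq_zero_of_transpose_eq_neg h2 hA i)
  let e : Fin 2 ⊕ {k // k ∉ Set.range ![i, j]} ≃ n :=
    (Equiv.sumCongr (Equiv.ofInjective _ hf) (Equiv.refl _)).trans (Equiv.sumCompl _)
  set M := A.submatrix e e
  have hM : Mᵀ = -M := by rw [transpose_submatrix, hA]; rfl
  have hM₁₁ : M.toBlocks₁₁.det = A i j ^ 2 := by
    rw [det_fin_two_of_transpose_eq_neg h2]
    · rfl
    · ext a b
      exact congr_fun₂ hM (.inl a) (.inl b)
  rw [← fromBlocks_toBlocks M] at hM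
  obtain ⟨S, hS, hdet⟩ := exists_transpose_eq_neg_det_fromBlocks_eq_det_mul hM
    (hM₁₁ ▸ pow_ne_zero 2 hij)
  have hcard : Fintype.card {k // k ∉ Set.range ![i, j]} < N :=
    hN ▸ Fintype.card_subtype_lt (x := i) (by simp)
  obtain ⟨s, hs⟩ := ih _ hcard hS rfl
  rw [← det_submatrix_equiv_self e A, ← fromBlocks_toBlocks (A.submatrix e e), hdet, hM₁₁, hs]
  exact ⟨A i j * s, by ring⟩

theorem _root_.IsIntegrallyClosed.isSquare_det_of_transpose_eq_neg {R : Type*} [CommRing R]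
    [IsDomain R] [IsIntegrallyClosed R] (h2 : (2 : R) ≠ 0) {A : Matrix n n R} (hA : Aᵀ = -A) :
    IsSquare A.det := by
  let L := FractionRing R
  have h2L : (2 : L) ≠ 0 := by
    rw [← map_ofNat (algebraMap R L)]
    exact (map_ne_zero_iff _ (IsFractionRing.injective R L)).mpr h2
  apply IsIntegrallyClosed.isSquare_of_isSquare_algebraMap (K := L)
  rw [RingHom.map_det]
  refine Matrix.isSquare_det_of_transpose_eq_neg h2L ?_
  rw [RingHom.mapMatrix_apply, ← transpose_map, hA, Matrix.map_neg _ (map_neg _)]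

theorem map_C_mul_charmatrix_mul {R : Type*} [CommRing R] (A B : Matrix n n R) :
    A.map C * charmatrix (B * A) = charmatrix (A * B) * A.map C := by
  simp only [charmatrix, RingHom.mapMatrix_apply, Matrix.map_mul, mul_sub, sub_mul,
    Matrix.mul_assoc, (scalar_commute (X : R[X]) (fun _ => Commute.all _ _) (A.map C)).eq]

theorem transpose_charmatrix_mul_mul_map_C {R : Type*} [CommRing R] {A B : Matrix n n R}
    (hA : Aᵀ = -A) (hB : Bᵀ = -B) :
    (charmatrix (A * B) * A.map C)ᵀ = -(charmatrix (A * B) * A.map C) := by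
  rw [transpose_mul, ← charmatrix_transpose, transpose_mul, ← transpose_map, hA, hB,
    neg_mul_neg, Matrix.map_neg _ (map_neg C), Matrix.neg_mul, map_C_mul_charmatrix_mul]

theorem even_rootMultiplicity_charpoly_mul_of_det_ne_zero (h2 : (2 : K) ≠ 0)
    {A B : Matrix n n K} (hA : Aᵀ = -A) (hB : Bᵀ = -B) (hdet : A.det ≠ 0) (a : K) :
    Even ((A * B).charpoly.rootMultiplicity a) := by
  have h2X : (2 : K[X]) ≠ 0 := by
    rw [← map_ofNat C]
    exact C_ne_zero.mpr h2
  have h := even_rootMultiplicity_of_isSquare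
    (IsIntegrallyClosed.isSquare_det_of_transpose_eq_neg h2X
      (transpose_charmatrix_mul_mul_map_C hA hB)) a
  have hC : (A.map C).det = C A.det := (RingHom.map_det C A).symm
  rwa [det_mul, hC, ← charpoly, rootMultiplicity_mul
    (mul_ne_zero (charpoly_monic _).ne_zero (C_ne_zero.mpr hdet)), rootMultiplicity_C,
    add_zero] at h

theorem even_rootMultiplicity_charpoly_mul_of_transpose_eq_neg (h2 : (2 : K) ≠ 0)
    {A B : Matrix n n K} (hA : Aᵀ = -A) (hB : Bᵀ = -B) {μ : K} (hμ : μ ≠ 0) :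
    Even ((A * B).charpoly.rootMultiplicity μ) := by
  let A₂ : Matrix (n ⊕ n) (n ⊕ n) K := fromBlocks A 1 (-1) 0
  let B₂ : Matrix (n ⊕ n) (n ⊕ n) K := fromBlocks B 0 0 0
  have hA₂ : A₂ᵀ = -A₂ := by simp [A₂, fromBlocks_transpose, fromBlocks_neg, hA]
  have hB₂ : B₂ᵀ = -B₂ := by simp [B₂, fromBlocks_transpose, fromBlocks_neg, hB]
  have hA₂_det : A₂.det ≠ 0 :=
    det_ne_zero_of_right_inverse (B := fromBlocks 0 (-1) 1 A) (by simp [A₂, fromBlocks_multiply])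
  have hcharpoly : (A₂ * B₂).charpoly = (A * B).charpoly * X ^ Fintype.card n := by
    simp [A₂, B₂, fromBlocks_multiply]
  have h := even_rootMultiplicity_charpoly_mul_of_det_ne_zero h2 hA₂ hB₂ hA₂_det μ
  rwa [hcharpoly, rootMultiplicity_mul (mul_ne_zero (charpoly_monic _).ne_zero
      (pow_ne_zero _ X_ne_zero)),
    rootMultiplicity_eq_zero (p := X ^ Fintype.card n) (by simp [hμ]), add_zero] at h

end Matrix

/-- Stenzel's theorem (weak form): for skew-symmetric complex n×n matrices X and Y,
every nonzero eigenvalue of the product XY has even algebraic multiplicity as a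
root of the characteristic polynomial. -/
theorem stenzel_even_multiplicity {n : ℕ} (X Y : Matrix (Fin n) (Fin n) ℂ)
    (hX : X.transpose = -X) (hY : Y.transpose = -Y) (μ : ℂ) (hμ : μ ≠ 0) :
    Even (Polynomial.rootMultiplicity μ (X * Y).charpoly) :=
  Matrix.even_rootMultiplicity_charpoly_mul_of_transpose_eq_neg two_ne_zero hX hY hμ
end
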